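/- Let A : ℝⁿ → symmetric n×n matrices be Lipschitz with constant η, uniformly elliptic with constant λ, and A(0) = I. Define μ(x) = (A(x)x·x)/|x|² and the vector field Z(x) = A(x)x/μ(x) for x ≠ 0. Then Z(x)·x = |x|², and there exist constants c₂, c₃ depending only on n and λ such that for a.e. x ∈ B_r: |δ_{ik} - ∂_iZ_k(x)| ≤ c₂ηr for all i,k, and |div Z(x) - n| ≤ c₃ηr. -/

import Mathlib

open MeasureTheory Metric Real Set

noncomputable section

/-- The bilinear form `A(x)ξ·ζ`. -/
def quadA {n : ℕ} (A : EuclideanSpace ℝ (Fin n) → Matrix (Fin n) (Fin n) ℝ)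
    (x ξ ζ : EuclideanSpace ℝ (Fin n)) : ℝ :=
  ∑ i, ∑ j, A x i j * ξ i * ζ j

/-- `μ(x) = A(x)x·x / |x|²`. -/
def muA {n : ℕ} (A : EuclideanSpace ℝ (Fin n) → Matrix (Fin n) (Fin n) ℝ)
    (x : EuclideanSpace ℝ (Fin n)) : ℝ :=
  quadA A x x x / ‖x‖ ^ 2

/-- The vector field `Z(x) = A(x)x / μ(x)`. -/
def Zf {n : ℕ} (A : EuclideanSpace ℝ (Fin n) → Matrix (Fin n) (Fin n) ℝ)
    (x : EuclideanSpace ℝ (Fin n)) : EuclideanSpace ℝ (Fin n) :=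
  WithLp.toLp 2 (fun i => (muA A x)⁻¹ * ∑ j, A x i j * x j)

/-- The divergence of a vector field. -/
def divg {n : ℕ} (F : EuclideanSpace ℝ (Fin n) → EuclideanSpace ℝ (Fin n))
    (x : EuclideanSpace ℝ (Fin n)) : ℝ :=
  ∑ i, fderiv ℝ (fun y => F y i) x (EuclideanSpace.single i 1)

/-! ### Auxiliary material -/

section Aux

variable {n : ℕ}

local notation "ES" => EuclideanSpace ℝ (Fin n)

lemma norm_sq_eq (x : ES) : ‖x‖ ^ 2 = ∑ i, x i ^ 2 := by
  rw [EuclideanSpace.norm_eq, Real.sq_sqrt (by positivity)]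
  simp [sq_abs]

lemma coord_abs_le (x : ES) (i : Fin n) : |x i| ≤ ‖x‖ := by
  have h1 : |x i| ^ 2 ≤ ‖x‖ ^ 2 := by
    rw [norm_sq_eq, sq_abs]
    exact Finset.single_le_sum (f := fun j => x j ^ 2) (fun j _ => sq_nonneg _)
      (Finset.mem_univ i)
  exact abs_le_of_sq_le_sq' (by simpa [sq_abs] using h1) (norm_nonneg x) |>.2

lemma sum_abs_le (x : ES) : ∑ j, |x j| ≤ (n : ℝ) * ‖x‖ := by
  calc ∑ j, |x j| ≤ ∑ _j : Fin n, ‖x‖ := Finset.sum_le_sum (fun j _ => coord_abs_le x j)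
  _ = (n : ℝ) * ‖x‖ := by simp [Finset.sum_const, mul_comm]

def Sform (M : Matrix (Fin n) (Fin n) ℝ) (ξ ζ : ES) : ℝ :=
  ∑ i, ∑ j, M i j * ξ i * ζ j

lemma quadA_eq_Sform (A : ES → Matrix (Fin n) (Fin n) ℝ) (x ξ ζ : ES) :
    quadA A x ξ ζ = Sform (A x) ξ ζ := rfl

lemma Sform_bound {M : Matrix (Fin n) (Fin n) ℝ} {c : ℝ} (hc : 0 ≤ c)
    (h : ∀ i j, |M i j| ≤ c) (ξ ζ : ES) :
    |Sform M ξ ζ| ≤ (n : ℝ)^2 * c * ‖ξ‖ * ‖ζ‖ := by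
  calc |Sform M ξ ζ| ≤ ∑ i, |∑ j, M i j * ξ i * ζ j| := Finset.abs_sum_le_sum_abs _ _
    _ ≤ ∑ i : Fin n, ∑ j : Fin n, |M i j * ξ i * ζ j| :=
        Finset.sum_le_sum fun i _ => Finset.abs_sum_le_sum_abs _ _
    _ ≤ ∑ _i : Fin n, ∑ _j : Fin n, c * ‖ξ‖ * ‖ζ‖ := by
        refine Finset.sum_le_sum fun i _ => Finset.sum_le_sum fun j _ => ?_
        rw [abs_mul, abs_mul]
        exact mul_le_mul (mul_le_mul (h i j) (coord_abs_le ξ i) (abs_nonneg _) hc)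
          (coord_abs_le ζ j) (abs_nonneg _) (by positivity)
    _ = (n : ℝ)^2 * c * ‖ξ‖ * ‖ζ‖ := by simp [Finset.sum_const]; ring

lemma Sform_sub_matrix (M M' : Matrix (Fin n) (Fin n) ℝ) (ξ ζ : ES) :
    Sform M ξ ζ - Sform M' ξ ζ = Sform (M - M') ξ ζ := by
  simp only [Sform, ← Finset.sum_sub_distrib, Matrix.sub_apply]
  refine Finset.sum_congr rfl fun i _ => Finset.sum_congr rfl fun j _ => by ring

lemma Sform_bilin (M : Matrix (Fin n) (Fin n) ℝ) (u v : ES) :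
    Sform M u u - Sform M v v = Sform M (u - v) u + Sform M v (u - v) := by
  simp only [Sform, ← Finset.sum_sub_distrib, ← Finset.sum_add_distrib, PiLp.sub_apply]
  refine Finset.sum_congr rfl fun i _ => Finset.sum_congr rfl fun j _ => by ring

lemma Sform_one (u : ES) : Sform 1 u u = ‖u‖ ^ 2 := by
  simp only [Sform, Matrix.one_apply, ite_mul, one_mul, zero_mul,
    Finset.sum_ite_eq, Finset.mem_univ, if_true]
  have := norm_sq_eq u
  simp only [sq] at this ⊢
  linarith [this]

lemma Sform_single_left (M : Matrix (Fin n) (Fin n) ℝ) (i : Fin n) (x : ES) :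
    Sform M (EuclideanSpace.single i 1) x = ∑ j, M i j * x j := by
  simp only [Sform, EuclideanSpace.single_apply, mul_ite, mul_one, mul_zero, ite_mul, zero_mul]
  rw [Finset.sum_comm]
  simp [Finset.sum_ite_eq']

lemma delta_sum (w : ES) (k : Fin n) :
    ∑ j, (1 : Matrix (Fin n) (Fin n) ℝ) k j * w j = w k := by
  simp [Matrix.one_apply, ite_mul, Finset.sum_ite_eq]

lemma Sform_smul_left (M : Matrix (Fin n) (Fin n) ℝ) (c : ℝ) (ξ ζ : ES) :
    Sform M (c • ξ) ζ = c * Sform M ξ ζ := by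
  simp only [Sform, PiLp.smul_apply, smul_eq_mul, Finset.mul_sum]
  exact Finset.sum_congr rfl fun i _ => Finset.sum_congr rfl fun j _ => by ring

lemma Sform_smul_right (M : Matrix (Fin n) (Fin n) ℝ) (c : ℝ) (ξ ζ : ES) :
    Sform M ξ (c • ζ) = c * Sform M ξ ζ := by
  simp only [Sform, PiLp.smul_apply, smul_eq_mul, Finset.mul_sum]
  exact Finset.sum_congr rfl fun i _ => Finset.sum_congr rfl fun j _ => by ring

lemma unit_diff {x y : ES} (hx : x ≠ 0) (hy : y ≠ 0) :
    ‖(‖x‖⁻¹ • x : ES) - ‖y‖⁻¹ • y‖ ≤ 2 * ‖x - y‖ / ‖y‖ := by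
  have hxn : (0:ℝ) < ‖x‖ := norm_pos_iff.2 hx
  have hyn : (0:ℝ) < ‖y‖ := norm_pos_iff.2 hy
  have key : (‖x‖⁻¹ • x : ES) - ‖y‖⁻¹ • y
      = ‖y‖⁻¹ • (x - y) + (‖x‖⁻¹ - ‖y‖⁻¹) • x := by
    rw [smul_sub, sub_smul]; abel
  rw [key]
  have h1 : ‖(‖y‖⁻¹ • (x - y) : ES)‖ = ‖x - y‖ / ‖y‖ := by
    rw [norm_smul]; simp [abs_of_pos (inv_pos.2 hyn), div_eq_inv_mul]
  have h2 : ‖((‖x‖⁻¹ - ‖y‖⁻¹) • x : ES)‖ ≤ ‖x - y‖ / ‖y‖ := by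
    rw [norm_smul]
    have e : ‖x‖⁻¹ - ‖y‖⁻¹ = (‖y‖ - ‖x‖) / (‖x‖ * ‖y‖) := by field_simp
    have h3 : |‖y‖ - ‖x‖| ≤ ‖x - y‖ := by
      rw [abs_sub_comm]; exact abs_norm_sub_norm_le x y
    rw [e, Real.norm_eq_abs, abs_div, abs_of_pos (mul_pos hxn hyn)]
    calc |‖y‖ - ‖x‖| / (‖x‖ * ‖y‖) * ‖x‖ = |‖y‖ - ‖x‖| / ‖y‖ := by
          field_simp
      _ ≤ ‖x - y‖ / ‖y‖ := by gcongr
  calc ‖(‖y‖⁻¹ • (x - y) : ES) + (‖x‖⁻¹ - ‖y‖⁻¹) • x‖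
      ≤ ‖(‖y‖⁻¹ • (x - y) : ES)‖ + ‖((‖x‖⁻¹ - ‖y‖⁻¹) • x : ES)‖ := norm_add_le _ _
    _ ≤ ‖x - y‖ / ‖y‖ + ‖x - y‖ / ‖y‖ := by rw [h1]; exact add_le_add le_rfl h2
    _ = 2 * ‖x - y‖ / ‖y‖ := by ring

end Aux

section Main

variable {n : ℕ} {A : EuclideanSpace ℝ (Fin n) → Matrix (Fin n) (Fin n) ℝ} {lam η : ℝ}

local notation "ES" => EuclideanSpace ℝ (Fin n)

lemma entry_lip (hη : 0 ≤ η)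
    (hlip : ∀ i j, LipschitzWith (Real.toNNReal η) (fun x => A x i j))
    (x y : ES) (i j : Fin n) : |A x i j - A y i j| ≤ η * ‖x - y‖ := by
  have h := (hlip i j).dist_le_mul x y
  rw [Real.dist_eq, dist_eq_norm, Real.coe_toNNReal η hη] at h
  exact h

lemma entry_one (hη : 0 ≤ η)
    (hlip : ∀ i j, LipschitzWith (Real.toNNReal η) (fun x => A x i j))
    (hA0 : A 0 = 1) (x : ES) (i j : Fin n) :
    |A x i j - (1 : Matrix (Fin n) (Fin n) ℝ) i j| ≤ η * ‖x‖ := by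
  rw [← hA0]
  simpa [sub_zero] using entry_lip hη hlip x 0 i j

lemma mu_pos_lb (hlam : 0 < lam) (hell : ∀ x ξ, lam * ‖ξ‖ ^ 2 ≤ quadA A x ξ ξ)
    {x : ES} (hx : x ≠ 0) : lam ≤ muA A x := by
  have hn : (0:ℝ) < ‖x‖ ^ 2 := pow_pos (norm_pos_iff.2 hx) 2
  rw [muA, le_div_iff₀ hn]
  exact hell x x

lemma mu_ub (hlam : 0 < lam) (hbdd : ∀ x ξ ζ, |quadA A x ξ ζ| ≤ lam⁻¹ * ‖ξ‖ * ‖ζ‖)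
    {x : ES} (hx : x ≠ 0) : muA A x ≤ lam⁻¹ := by
  have hn : (0:ℝ) < ‖x‖ ^ 2 := pow_pos (norm_pos_iff.2 hx) 2
  rw [muA, div_le_iff₀ hn]
  have := (abs_le.1 (hbdd x x x)).2
  nlinarith [this]

lemma mu_sub_one (hη : 0 ≤ η)
    (hlip : ∀ i j, LipschitzWith (Real.toNNReal η) (fun x => A x i j))
    (hA0 : A 0 = 1) {x : ES} (hx : x ≠ 0) :
    |muA A x - 1| ≤ (n:ℝ)^2 * η * ‖x‖ := by
  have hn : (0:ℝ) < ‖x‖ := norm_pos_iff.2 hx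
  have hn2 : (0:ℝ) < ‖x‖ ^ 2 := by positivity
  have key : muA A x - 1 = Sform (A x - 1) x x / ‖x‖ ^ 2 := by
    rw [muA, quadA_eq_Sform, ← Sform_sub_matrix, Sform_one x]
    field_simp
  rw [key, abs_div, abs_of_pos hn2, div_le_iff₀ hn2]
  have hb := Sform_bound (M := A x - 1) (c := η * ‖x‖) (by positivity)
    (fun i j => by simpa [Matrix.sub_apply] using entry_one hη hlip hA0 x i j) x x
  calc |Sform (A x - 1) x x| ≤ (n:ℝ)^2 * (η * ‖x‖) * ‖x‖ * ‖x‖ := hb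
    _ = (n:ℝ)^2 * η * ‖x‖ * ‖x‖ ^ 2 := by ring

lemma muA_eq_unit {x : ES} (hx : x ≠ 0) :
    muA A x = Sform (A x) (‖x‖⁻¹ • x) (‖x‖⁻¹ • x) := by
  have hn : (0:ℝ) < ‖x‖ := norm_pos_iff.2 hx
  rw [Sform_smul_left, Sform_smul_right, muA, quadA_eq_Sform, div_eq_mul_inv, ← inv_pow]
  ring

lemma mu_lip (hη : 0 ≤ η)
    (hlip : ∀ i j, LipschitzWith (Real.toNNReal η) (fun x => A x i j))
    (hA0 : A 0 = 1) {x y : ES} (hx : x ≠ 0) (hy : y ≠ 0) :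
    |muA A x - muA A y| ≤ 5 * (n:ℝ)^2 * η * ‖x - y‖ := by
  have hxn : (0:ℝ) < ‖x‖ := norm_pos_iff.2 hx
  have hyn : (0:ℝ) < ‖y‖ := norm_pos_iff.2 hy
  set u : ES := ‖x‖⁻¹ • x with hu
  set v : ES := ‖y‖⁻¹ • y with hv
  have hun : ‖u‖ = 1 := by
    rw [hu, norm_smul, Real.norm_eq_abs, abs_of_pos (inv_pos.2 hxn)]
    field_simp
  have hvn : ‖v‖ = 1 := by
    rw [hv, norm_smul, Real.norm_eq_abs, abs_of_pos (inv_pos.2 hyn)]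
    field_simp
  have huv : ‖u - v‖ ≤ 2 * ‖x - y‖ / ‖y‖ := unit_diff hx hy
  -- decomposition
  have dec : muA A x - muA A y
      = Sform (A x - A y) u u
        + (Sform (A y - 1) (u - v) u + Sform (A y - 1) v (u - v)) := by
    rw [muA_eq_unit hx, muA_eq_unit hy, ← hu, ← hv]
    have e1 : Sform (A y) u u - Sform (A y) v v
        = (Sform (A y - 1) u u - Sform (A y - 1) v v)
          + (Sform 1 u u - Sform 1 v v) := by
      have q1 := Sform_sub_matrix (A y) (A y - 1) u u
      have q2 := Sform_sub_matrix (A y) (A y - 1) v v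
      rw [sub_sub_cancel] at q1 q2
      linarith
    have e2 : Sform 1 u u - Sform 1 v v = 0 := by
      rw [Sform_one, Sform_one, hun, hvn]
      norm_num
    have e3 := Sform_bilin (A y - 1) u v
    have e4 := Sform_sub_matrix (A x) (A y) u u
    linarith
  rw [dec]
  -- bounds
  have b1 : |Sform (A x - A y) u u| ≤ (n:ℝ)^2 * (η * ‖x - y‖) * 1 * 1 := by
    have := Sform_bound (M := A x - A y) (c := η * ‖x - y‖) (by positivity)
      (fun i j => by simpa [Matrix.sub_apply] using entry_lip hη hlip x y i j) u u
    rwa [hun] at this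
  have hAy1 : ∀ i j, |(A y - 1) i j| ≤ η * ‖y‖ :=
    fun i j => by simpa [Matrix.sub_apply] using entry_one hη hlip hA0 y i j
  have b2 : |Sform (A y - 1) (u - v) u| ≤ (n:ℝ)^2 * (η * ‖y‖) * (2 * ‖x - y‖ / ‖y‖) * 1 := by
    have := Sform_bound (M := A y - 1) (c := η * ‖y‖) (by positivity) hAy1 (u - v) u
    rw [hun] at this
    calc |Sform (A y - 1) (u - v) u| ≤ (n:ℝ)^2 * (η * ‖y‖) * ‖u - v‖ * 1 := this
      _ ≤ (n:ℝ)^2 * (η * ‖y‖) * (2 * ‖x - y‖ / ‖y‖) * 1 := by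
          have : (0:ℝ) ≤ (n:ℝ)^2 * (η * ‖y‖) := by positivity
          nlinarith [huv]
  have b3 : |Sform (A y - 1) v (u - v)| ≤ (n:ℝ)^2 * (η * ‖y‖) * 1 * (2 * ‖x - y‖ / ‖y‖) := by
    have := Sform_bound (M := A y - 1) (c := η * ‖y‖) (by positivity) hAy1 v (u - v)
    rw [hvn] at this
    calc |Sform (A y - 1) v (u - v)| ≤ (n:ℝ)^2 * (η * ‖y‖) * 1 * ‖u - v‖ := this
      _ ≤ (n:ℝ)^2 * (η * ‖y‖) * 1 * (2 * ‖x - y‖ / ‖y‖) := by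
          have : (0:ℝ) ≤ (n:ℝ)^2 * (η * ‖y‖) := by positivity
          nlinarith [huv]
  have hcancel : (n:ℝ)^2 * (η * ‖y‖) * (2 * ‖x - y‖ / ‖y‖) = 2 * (n:ℝ)^2 * η * ‖x - y‖ := by
    field_simp
  calc |Sform (A x - A y) u u + (Sform (A y - 1) (u - v) u + Sform (A y - 1) v (u - v))|
      ≤ |Sform (A x - A y) u u| + (|Sform (A y - 1) (u - v) u| + |Sform (A y - 1) v (u - v)|) := by
        exact (abs_add_le _ _).trans (add_le_add le_rfl (abs_add_le _ _))
    _ ≤ 5 * (n:ℝ)^2 * η * ‖x - y‖ := by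
        rw [mul_one] at b2
        rw [mul_one] at b3
        rw [hcancel] at b2 b3
        nlinarith [b1, b2, b3]

lemma W_bound (hlam : 0 < lam) (hbdd : ∀ x ξ ζ, |quadA A x ξ ζ| ≤ lam⁻¹ * ‖ξ‖ * ‖ζ‖)
    (x : ES) (i : Fin n) : |∑ j, A x i j * x j| ≤ lam⁻¹ * ‖x‖ := by
  have := hbdd x (EuclideanSpace.single i 1) x
  rw [quadA_eq_Sform, Sform_single_left, EuclideanSpace.norm_single] at this
  simpa using this

end Main

section Main2

variable {n : ℕ} {A : EuclideanSpace ℝ (Fin n) → Matrix (Fin n) (Fin n) ℝ} {lam η : ℝ}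

local notation "ES" => EuclideanSpace ℝ (Fin n)

lemma sum_mul_abs_le {c : ℝ} (hc : 0 ≤ c) {f : Fin n → ℝ} (hf : ∀ j, |f j| ≤ c) (w : ES) :
    |∑ j, f j * w j| ≤ c * ((n:ℝ) * ‖w‖) := by
  calc |∑ j, f j * w j| ≤ ∑ j, |f j * w j| := Finset.abs_sum_le_sum_abs _ _
    _ ≤ ∑ j, c * |w j| := Finset.sum_le_sum fun j _ => by
        rw [abs_mul]
        exact mul_le_mul (hf j) le_rfl (abs_nonneg _) hc
    _ = c * ∑ j, |w j| := (Finset.mul_sum _ _ _).symm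
    _ ≤ c * ((n:ℝ) * ‖w‖) := mul_le_mul_of_nonneg_left (sum_abs_le w) hc

lemma Zf_sub (hlam : 0 < lam) (hell : ∀ x ξ, lam * ‖ξ‖ ^ 2 ≤ quadA A x ξ ξ)
    {x : ES} (hx : x ≠ 0) (k : Fin n) :
    Zf A x k - x k = (muA A x)⁻¹ * ((∑ j, A x k j * x j) - muA A x * x k) := by
  have hm : muA A x ≠ 0 := ne_of_gt (lt_of_lt_of_le hlam (mu_pos_lb hlam hell hx))
  show (muA A x)⁻¹ * (∑ j, A x k j * x j) - x k = _
  rw [mul_sub, ← mul_assoc, inv_mul_cancel₀ hm, one_mul]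

lemma Zf_zero (k : Fin n) : Zf A 0 k = 0 := by
  show (muA A 0)⁻¹ * ∑ j, A 0 k j * (0 : ES) j = 0
  simp

lemma H_one_bound (hη : 0 ≤ η) (hlam : 0 < lam)
    (hlip : ∀ i j, LipschitzWith (Real.toNNReal η) (fun x => A x i j))
    (hA0 : A 0 = 1) {x : ES} (hx : x ≠ 0) (k : Fin n) :
    |(∑ j, A x k j * x j) - muA A x * x k|
      ≤ ((n:ℝ) + (n:ℝ)^2) * η * ‖x‖ * ‖x‖ := by
  have hid : (∑ j, A x k j * x j) - muA A x * x k
      = (∑ j, (A x k j - (1 : Matrix (Fin n) (Fin n) ℝ) k j) * x j)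
        + (1 - muA A x) * x k := by
    simp only [sub_mul, Finset.sum_sub_distrib, delta_sum]
    ring
  rw [hid]
  have b1 : |∑ j, (A x k j - (1 : Matrix (Fin n) (Fin n) ℝ) k j) * x j|
      ≤ (η * ‖x‖) * ((n:ℝ) * ‖x‖) :=
    sum_mul_abs_le (by positivity) (fun j => entry_one hη hlip hA0 x k j) x
  have b2 : |(1 - muA A x) * x k| ≤ ((n:ℝ)^2 * η * ‖x‖) * ‖x‖ := by
    rw [abs_mul]
    exact mul_le_mul (abs_sub_comm (1:ℝ) (muA A x) ▸ mu_sub_one hη hlip hA0 hx)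
      (coord_abs_le x k) (abs_nonneg _) (by positivity)
  calc |_ + _| ≤ _ + _ := abs_add_le _ _
    _ ≤ (η * ‖x‖) * ((n:ℝ) * ‖x‖) + ((n:ℝ)^2 * η * ‖x‖) * ‖x‖ := add_le_add b1 b2
    _ = ((n:ℝ) + (n:ℝ)^2) * η * ‖x‖ * ‖x‖ := by ring

lemma H_diff_bound (hη : 0 ≤ η) (hlam : 0 < lam)
    (hlip : ∀ i j, LipschitzWith (Real.toNNReal η) (fun x => A x i j))
    (hA0 : A 0 = 1) {x y : ES} (hx : x ≠ 0) (hy : y ≠ 0) {r : ℝ}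
    (hxr : ‖x‖ ≤ r) (hyr : ‖y‖ ≤ r) (k : Fin n) :
    |((∑ j, A x k j * x j) - muA A x * x k) - ((∑ j, A y k j * y j) - muA A y * y k)|
      ≤ (2*(n:ℝ) + 6*(n:ℝ)^2) * η * r * ‖x - y‖ := by
  set T1 := ∑ j, (A x k j - (1 : Matrix (Fin n) (Fin n) ℝ) k j) * (x j - y j) with hT1
  set T2 := ∑ j, (A x k j - A y k j) * y j with hT2
  set T3 := (1 - muA A x) * (x k - y k) with hT3
  set T4 := (muA A y - muA A x) * y k with hT4
  have e1 : T1 = (∑ j, A x k j * x j) - (∑ j, A x k j * y j) - (x k - y k) := by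
    rw [hT1]
    simp only [sub_mul, mul_sub, Finset.sum_sub_distrib, delta_sum]
    ring
  have e2 : T2 = (∑ j, A x k j * y j) - (∑ j, A y k j * y j) := by
    rw [hT2]; simp only [sub_mul, Finset.sum_sub_distrib]
  have hid : ((∑ j, A x k j * x j) - muA A x * x k) - ((∑ j, A y k j * y j) - muA A y * y k)
      = T1 + T2 + T3 + T4 := by
    rw [e1, e2, hT3, hT4]; ring
  rw [hid]
  have hd : (0:ℝ) ≤ ‖x - y‖ := norm_nonneg _
  have hrn : (0:ℝ) ≤ r := le_trans (norm_nonneg x) hxr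
  have b1 : |T1| ≤ (η * ‖x‖) * ((n:ℝ) * ‖x - y‖) := by
    have := sum_mul_abs_le (c := η * ‖x‖) (by positivity)
      (fun j => entry_one hη hlip hA0 x k j) (x - y)
    simpa only [PiLp.sub_apply] using this
  have b2 : |T2| ≤ (η * ‖x - y‖) * ((n:ℝ) * ‖y‖) :=
    sum_mul_abs_le (by positivity) (fun j => entry_lip hη hlip x y k j) y
  have b3 : |T3| ≤ ((n:ℝ)^2 * η * ‖x‖) * ‖x - y‖ := by
    rw [hT3, abs_mul]
    have hxk : |x k - y k| ≤ ‖x - y‖ := by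
      have := coord_abs_le (x - y) k
      simpa only [PiLp.sub_apply] using this
    exact mul_le_mul (abs_sub_comm (1:ℝ) (muA A x) ▸ mu_sub_one hη hlip hA0 hx)
      hxk (abs_nonneg _) (by positivity)
  have b4 : |T4| ≤ (5 * (n:ℝ)^2 * η * ‖x - y‖) * ‖y‖ := by
    rw [hT4, abs_mul]
    exact mul_le_mul (abs_sub_comm (muA A y) (muA A x) ▸ mu_lip hη hlip hA0 hx hy)
      (coord_abs_le y k) (abs_nonneg _) (by positivity)
  have hN : (0:ℝ) ≤ (n:ℝ) := Nat.cast_nonneg n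
  calc |T1 + T2 + T3 + T4| ≤ |T1| + |T2| + |T3| + |T4| := by
        exact (abs_add_le _ _).trans (add_le_add ((abs_add_le _ _).trans
          (add_le_add ((abs_add_le _ _).trans (add_le_add le_rfl le_rfl)) le_rfl)) le_rfl)
    _ ≤ (η * ‖x‖) * ((n:ℝ) * ‖x - y‖) + (η * ‖x - y‖) * ((n:ℝ) * ‖y‖)
        + ((n:ℝ)^2 * η * ‖x‖) * ‖x - y‖ + (5 * (n:ℝ)^2 * η * ‖x - y‖) * ‖y‖ := by
        exact add_le_add (add_le_add (add_le_add b1 b2) b3) b4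
    _ ≤ (2*(n:ℝ) + 6*(n:ℝ)^2) * η * r * ‖x - y‖ := by
        nlinarith [mul_nonneg (mul_nonneg (mul_nonneg hη hN) hd) (sub_nonneg.2 hxr),
          mul_nonneg (mul_nonneg (mul_nonneg hη hN) hd) (sub_nonneg.2 hyr),
          mul_nonneg (mul_nonneg (mul_nonneg hη (sq_nonneg (n:ℝ))) hd) (sub_nonneg.2 hxr),
          mul_nonneg (mul_nonneg (mul_nonneg hη (sq_nonneg (n:ℝ))) hd) (sub_nonneg.2 hyr)]

end Main2

def Cg (n : ℕ) (lam : ℝ) : ℝ := 16 * ((n:ℝ)^2 + (n:ℝ) + 1) * (lam⁻¹ + lam⁻¹^3)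

lemma Cg_pos {lam : ℝ} (hlam : 0 < lam) (n : ℕ) : 0 < Cg n lam := by
  unfold Cg
  have : (0:ℝ) < lam⁻¹ := inv_pos.2 hlam
  positivity

section Main3

variable {n : ℕ} {A : EuclideanSpace ℝ (Fin n) → Matrix (Fin n) (Fin n) ℝ} {lam η : ℝ}

local notation "ES" => EuclideanSpace ℝ (Fin n)

lemma key_lip (hη : 0 < η) (hlam : 0 < lam)
    (hell : ∀ x ξ, lam * ‖ξ‖ ^ 2 ≤ quadA A x ξ ξ)
    (hbdd : ∀ x ξ ζ, |quadA A x ξ ζ| ≤ lam⁻¹ * ‖ξ‖ * ‖ζ‖)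
    (hlip : ∀ i j, LipschitzWith (Real.toNNReal η) (fun x => A x i j))
    (hA0 : A 0 = 1) {r : ℝ} (hr : 0 < r) (k : Fin n) :
    LipschitzOnWith (Real.toNNReal (Cg n lam * η * r))
      (fun y : ES => Zf A y k - y k) (Metric.ball (0 : ES) r) := by
  have hCg : 0 < Cg n lam := Cg_pos hlam n
  have hli : (0:ℝ) < lam⁻¹ := inv_pos.2 hlam
  have hN : (0:ℝ) ≤ (n:ℝ) := Nat.cast_nonneg n
  rw [lipschitzOnWith_iff_dist_le_mul]
  intro x hx y hy
  rw [Real.dist_eq, dist_eq_norm, Real.coe_toNNReal _ (by positivity)]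
  have hxr : ‖x‖ ≤ r := le_of_lt (mem_ball_zero_iff.1 hx)
  have hyr : ‖y‖ ≤ r := le_of_lt (mem_ball_zero_iff.1 hy)
  -- pointwise bound, used when one point is the origin
  have pt : ∀ z : ES, z ≠ 0 → ‖z‖ ≤ r →
      |Zf A z k - z k| ≤ Cg n lam * η * r * ‖z‖ := by
    intro z hz hzr
    rw [Zf_sub hlam hell hz k, abs_mul]
    have hmz := mu_pos_lb hlam hell hz
    have hmzpos : 0 < muA A z := lt_of_lt_of_le hlam hmz
    have hinv : |(muA A z)⁻¹| ≤ lam⁻¹ := by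
      rw [abs_of_pos (inv_pos.2 hmzpos)]
      exact inv_anti₀ hlam hmz
    have h1 := H_one_bound hη.le hlam hlip hA0 hz k
    calc |(muA A z)⁻¹| * |(∑ j, A z k j * z j) - muA A z * z k|
        ≤ lam⁻¹ * (((n:ℝ) + (n:ℝ)^2) * η * ‖z‖ * ‖z‖) :=
          mul_le_mul hinv h1 (abs_nonneg _) hli.le
      _ ≤ Cg n lam * η * r * ‖z‖ := by
          have h2 : ((n:ℝ) + (n:ℝ)^2) * lam⁻¹ ≤ Cg n lam := by
            unfold Cg
            nlinarith [mul_nonneg hN hli.le, sq_nonneg (n:ℝ),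
              mul_nonneg (mul_nonneg hN hN) hli.le, pow_pos hli 3]
          nlinarith [mul_nonneg (mul_nonneg (mul_nonneg hη.le (norm_nonneg z))
            (norm_nonneg z)) (sub_nonneg.2 h2), norm_nonneg z,
            mul_nonneg (mul_nonneg hη.le (norm_nonneg z)) (sub_nonneg.2 hzr),
            mul_nonneg hN hli.le, mul_nonneg (mul_nonneg hN hN) hli.le, hCg.le]
  by_cases hx0 : x = 0
  · subst hx0
    by_cases hy0 : y = 0
    · subst hy0; simp
    · have h0 : Zf A (0:ES) k - (0:ES) k = 0 := by rw [Zf_zero]; simp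
      rw [h0, zero_sub, abs_neg, zero_sub, norm_neg]
      exact pt y hy0 hyr
  · by_cases hy0 : y = 0
    · subst hy0
      have h0 : Zf A (0:ES) k - (0:ES) k = 0 := by rw [Zf_zero]; simp
      rw [h0, sub_zero, sub_zero]
      exact pt x hx0 hxr
    · -- main case
      have hmx := mu_pos_lb hlam hell hx0
      have hmy := mu_pos_lb hlam hell hy0
      have hmxp : 0 < muA A x := lt_of_lt_of_le hlam hmx
      have hmyp : 0 < muA A y := lt_of_lt_of_le hlam hmy
      set Hx := (∑ j, A x k j * x j) - muA A x * x k with hHx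
      set Hy := (∑ j, A y k j * y j) - muA A y * y k with hHy
      have dec : (Zf A x k - x k) - (Zf A y k - y k)
          = (muA A x)⁻¹ * (Hx - Hy) + ((muA A x)⁻¹ - (muA A y)⁻¹) * Hy := by
        rw [Zf_sub hlam hell hx0 k, Zf_sub hlam hell hy0 k, ← hHx, ← hHy]
        ring
      have hHd : |Hx - Hy| ≤ (2*(n:ℝ) + 6*(n:ℝ)^2) * η * r * ‖x - y‖ :=
        H_diff_bound hη.le hlam hlip hA0 hx0 hy0 hxr hyr k
      have hHyb : |Hy| ≤ 2 * lam⁻¹ * ‖y‖ := by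
        rw [hHy]
        calc |(∑ j, A y k j * y j) - muA A y * y k|
            ≤ |∑ j, A y k j * y j| + |muA A y * y k| := abs_sub _ _
          _ ≤ lam⁻¹ * ‖y‖ + lam⁻¹ * ‖y‖ := by
              refine add_le_add (W_bound hlam hbdd y k) ?_
              rw [abs_mul, abs_of_pos hmyp]
              exact mul_le_mul (mu_ub hlam hbdd hy0) (coord_abs_le y k)
                (abs_nonneg _) hli.le
          _ = 2 * lam⁻¹ * ‖y‖ := by ring
      have hinvd : |(muA A x)⁻¹ - (muA A y)⁻¹|
          ≤ lam⁻¹^2 * (5 * (n:ℝ)^2 * η * ‖x - y‖) := by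
        have e : (muA A x)⁻¹ - (muA A y)⁻¹
            = (muA A y - muA A x) / (muA A x * muA A y) := by
          field_simp
        rw [e, abs_div, abs_of_pos (mul_pos hmxp hmyp)]
        have h1 : |muA A y - muA A x| ≤ 5 * (n:ℝ)^2 * η * ‖x - y‖ :=
          abs_sub_comm (muA A x) (muA A y) ▸ mu_lip hη.le hlip hA0 hx0 hy0
        have hden : lam * lam ≤ muA A x * muA A y :=
          mul_le_mul hmx hmy hlam.le hmxp.le
        calc |muA A y - muA A x| / (muA A x * muA A y)
            ≤ |muA A y - muA A x| / (lam * lam) := by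
              exact div_le_div_of_nonneg_left (abs_nonneg _) (mul_pos hlam hlam) hden
          _ ≤ (5 * (n:ℝ)^2 * η * ‖x - y‖) / (lam * lam) := by gcongr
          _ = lam⁻¹^2 * (5 * (n:ℝ)^2 * η * ‖x - y‖) := by
              rw [div_eq_mul_inv, mul_inv, mul_comm]
              ring
      have hinvx : |(muA A x)⁻¹| ≤ lam⁻¹ := by
        rw [abs_of_pos (inv_pos.2 hmxp)]
        exact inv_anti₀ hlam hmx
      have hd : (0:ℝ) ≤ ‖x - y‖ := norm_nonneg _
      calc |(Zf A x k - x k) - (Zf A y k - y k)|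
          = |(muA A x)⁻¹ * (Hx - Hy) + ((muA A x)⁻¹ - (muA A y)⁻¹) * Hy| := by rw [dec]
        _ ≤ |(muA A x)⁻¹| * |Hx - Hy| + |(muA A x)⁻¹ - (muA A y)⁻¹| * |Hy| := by
            refine (abs_add_le _ _).trans ?_
            rw [abs_mul, abs_mul]
        _ ≤ lam⁻¹ * ((2*(n:ℝ) + 6*(n:ℝ)^2) * η * r * ‖x - y‖)
            + (lam⁻¹^2 * (5 * (n:ℝ)^2 * η * ‖x - y‖)) * (2 * lam⁻¹ * ‖y‖) := by
            refine add_le_add (mul_le_mul hinvx hHd (abs_nonneg _) hli.le) ?_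
            exact mul_le_mul hinvd hHyb (abs_nonneg _) (by positivity)
        _ ≤ Cg n lam * η * r * ‖x - y‖ := by
            have key : lam⁻¹ * (2*(n:ℝ) + 6*(n:ℝ)^2) + lam⁻¹^3 * (10 * (n:ℝ)^2)
                ≤ Cg n lam := by
              have hid : 16*((n:ℝ)^2+(n:ℝ)+1)*(lam⁻¹+lam⁻¹^3)
                  - (lam⁻¹*(2*(n:ℝ)+6*(n:ℝ)^2) + lam⁻¹^3*(10*(n:ℝ)^2))
                  = 10*((n:ℝ)^2*lam⁻¹) + 14*((n:ℝ)*lam⁻¹) + 16*lam⁻¹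
                    + 6*((n:ℝ)^2*lam⁻¹^3) + 16*((n:ℝ)*lam⁻¹^3) + 16*lam⁻¹^3 := by ring
              have p1 : (0:ℝ) ≤ (n:ℝ)^2*lam⁻¹ := by positivity
              have p2 : (0:ℝ) ≤ (n:ℝ)*lam⁻¹ := by positivity
              have p3 : (0:ℝ) ≤ lam⁻¹ := hli.le
              have p4 : (0:ℝ) ≤ (n:ℝ)^2*lam⁻¹^3 := by positivity
              have p5 : (0:ℝ) ≤ (n:ℝ)*lam⁻¹^3 := by positivity
              have p6 : (0:ℝ) ≤ lam⁻¹^3 := by positivity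
              unfold Cg
              linarith
            have hnn : (0:ℝ) ≤ η * r * ‖x - y‖ := by positivity
            have s2 : (lam⁻¹^2 * (5 * (n:ℝ)^2 * η * ‖x - y‖)) * (2 * lam⁻¹ * ‖y‖)
                ≤ (lam⁻¹^3 * (10 * (n:ℝ)^2)) * (η * r * ‖x - y‖) := by
              have e : (lam⁻¹^2 * (5 * (n:ℝ)^2 * η * ‖x - y‖)) * (2 * lam⁻¹ * ‖y‖)
                  = (lam⁻¹^3 * (10 * (n:ℝ)^2) * (η * ‖x - y‖)) * ‖y‖ := by ring
              have e2 : (lam⁻¹^3 * (10 * (n:ℝ)^2)) * (η * r * ‖x - y‖)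
                  = (lam⁻¹^3 * (10 * (n:ℝ)^2) * (η * ‖x - y‖)) * r := by ring
              rw [e, e2]
              exact mul_le_mul_of_nonneg_left hyr (by positivity)
            calc lam⁻¹ * ((2*(n:ℝ) + 6*(n:ℝ)^2) * η * r * ‖x - y‖)
                + (lam⁻¹^2 * (5 * (n:ℝ)^2 * η * ‖x - y‖)) * (2 * lam⁻¹ * ‖y‖)
                ≤ (lam⁻¹ * (2*(n:ℝ) + 6*(n:ℝ)^2)) * (η * r * ‖x - y‖)
                  + (lam⁻¹^3 * (10 * (n:ℝ)^2)) * (η * r * ‖x - y‖) := by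
                  refine add_le_add (le_of_eq (by ring)) s2
              _ = (lam⁻¹ * (2*(n:ℝ) + 6*(n:ℝ)^2) + lam⁻¹^3 * (10 * (n:ℝ)^2))
                  * (η * r * ‖x - y‖) := by ring
              _ ≤ Cg n lam * (η * r * ‖x - y‖) := mul_le_mul_of_nonneg_right key hnn
              _ = Cg n lam * η * r * ‖x - y‖ := by ring

end Main3

/-- `Z(x)·x = |x|²`, and `|δ_{ik} - ∂_iZ_k| ≤ c₂ηr`, `|div Z - n| ≤ c₃ηr`
a.e. on `B_r`. -/
theorem Z_estimates (n : ℕ) (lam : ℝ) (hlam : 0 < lam) :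
    ∃ c₂ c₃ : ℝ, 0 < c₂ ∧ 0 < c₃ ∧
      ∀ (A : EuclideanSpace ℝ (Fin n) → Matrix (Fin n) (Fin n) ℝ) (η : ℝ), 0 < η →
        (∀ x i j, A x i j = A x j i) →
        (∀ x ξ, lam * ‖ξ‖ ^ 2 ≤ quadA A x ξ ξ) →
        (∀ x ξ ζ, |quadA A x ξ ζ| ≤ lam⁻¹ * ‖ξ‖ * ‖ζ‖) →
        (∀ i j, LipschitzWith (Real.toNNReal η) (fun x => A x i j)) →
        A 0 = 1 →
        (∀ x : EuclideanSpace ℝ (Fin n), x ≠ 0 → (inner ℝ (Zf A x) x : ℝ) = ‖x‖ ^ 2) ∧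
        ∀ r : ℝ, 0 < r →
          ∀ᵐ x ∂(volume.restrict (Metric.ball (0 : EuclideanSpace ℝ (Fin n)) r)),
            (∀ i k : Fin n,
              |(if i = k then (1 : ℝ) else 0)
                - fderiv ℝ (fun y => Zf A y k) x (EuclideanSpace.single i 1)| ≤ c₂ * η * r)
            ∧ |divg (Zf A) x - n| ≤ c₃ * η * r := by
  have hCg : 0 < Cg n lam := Cg_pos hlam n
  refine ⟨Cg n lam + 1, ((n:ℝ) + 1) * (Cg n lam + 1), by positivity, by positivity, ?_⟩
  intro A η hη _hsym hell hbdd hlip hA0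
  constructor
  · -- inner product identity
    intro x hx
    have hn2 : (0:ℝ) < ‖x‖ ^ 2 := pow_pos (norm_pos_iff.2 hx) 2
    have hm : muA A x ≠ 0 := ne_of_gt (lt_of_lt_of_le hlam (mu_pos_lb hlam hell hx))
    have hinner : (inner ℝ (Zf A x) x : ℝ) = ∑ i, (Zf A x i) * (x i) := by
      rw [PiLp.inner_apply]
      simp [RCLike.inner_apply, conj_trivial, mul_comm]
    have e : ∑ i, Zf A x i * x i = (muA A x)⁻¹ * Sform (A x) x x := by
      rw [Sform, Finset.mul_sum]
      refine Finset.sum_congr rfl fun i _ => ?_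
      show ((muA A x)⁻¹ * ∑ j, A x i j * x j) * x i = _
      rw [Finset.mul_sum, Finset.sum_mul, Finset.mul_sum]
      exact Finset.sum_congr rfl fun j _ => by ring
    have eq2 : Sform (A x) x x = muA A x * ‖x‖ ^ 2 := by
      rw [← quadA_eq_Sform, muA]
      field_simp
    rw [hinner, e, eq2, ← mul_assoc, inv_mul_cancel₀ hm, one_mul]
  · -- derivative estimates
    intro r hr
    set K := Real.toNNReal (Cg n lam * η * r) with hK
    have hKcoe : (K : ℝ) = Cg n lam * η * r := Real.coe_toNNReal _ (by positivity)
    have hlipk : ∀ k : Fin n, LipschitzOnWith K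
        (fun y : EuclideanSpace ℝ (Fin n) => Zf A y k - y k) (Metric.ball 0 r) :=
      fun k => key_lip hη hlam hell hbdd hlip hA0 hr k
    have hae : ∀ᵐ x ∂(volume : Measure (EuclideanSpace ℝ (Fin n))),
        ∀ k : Fin n, x ∈ Metric.ball (0 : EuclideanSpace ℝ (Fin n)) r →
          DifferentiableWithinAt ℝ (fun y => Zf A y k - y k) (Metric.ball 0 r) x :=
      ae_all_iff.2 fun k => (hlipk k).ae_differentiableWithinAt_of_mem
    filter_upwards [ae_restrict_of_ae hae, ae_restrict_mem measurableSet_ball]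
      with x hdiff hxball
    have hball : Metric.ball (0 : EuclideanSpace ℝ (Fin n)) r ∈ nhds x :=
      isOpen_ball.mem_nhds hxball
    have core : ∀ i k : Fin n,
        |(if i = k then (1 : ℝ) else 0)
          - fderiv ℝ (fun y => Zf A y k) x (EuclideanSpace.single i 1)|
          ≤ Cg n lam * η * r := by
      intro i k
      have hdk : DifferentiableAt ℝ (fun y => Zf A y k - y k) x :=
        (hdiff k hxball).differentiableAt hball
      have hproj : DifferentiableAt ℝ (fun y : EuclideanSpace ℝ (Fin n) => y k) x :=
        (EuclideanSpace.proj (𝕜 := ℝ) k).differentiableAt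
      have heq : (fun y : EuclideanSpace ℝ (Fin n) => Zf A y k)
          = (fun y => (Zf A y k - y k) + y k) := by funext y; ring
      have hfproj : fderiv ℝ (fun y : EuclideanSpace ℝ (Fin n) => y k) x
          = EuclideanSpace.proj (𝕜 := ℝ) k := by
        exact (EuclideanSpace.proj (𝕜 := ℝ) k).fderiv
      have hfd : fderiv ℝ (fun y => Zf A y k) x
          = fderiv ℝ (fun y => Zf A y k - y k) x + EuclideanSpace.proj (𝕜 := ℝ) k := by
        rw [heq, fderiv_fun_add hdk hproj, hfproj]
      have hsingle : (EuclideanSpace.proj (𝕜 := ℝ) k) (EuclideanSpace.single i 1)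
          = if i = k then (1:ℝ) else 0 := by
        show (EuclideanSpace.single i (1:ℝ)) k = _
        simp [EuclideanSpace.single_apply, eq_comm]
      have hval : fderiv ℝ (fun y => Zf A y k) x (EuclideanSpace.single i 1)
          = fderiv ℝ (fun y => Zf A y k - y k) x (EuclideanSpace.single i 1)
            + (if i = k then (1:ℝ) else 0) := by
        rw [hfd, ContinuousLinearMap.add_apply, hsingle]
      rw [hval]
      have habs : ∀ a b : ℝ, |b - (a + b)| = |a| := by
        intro a b; rw [abs_sub_comm]; congr 1; ring
      rw [habs]
      have hnb : ‖fderiv ℝ (fun y => Zf A y k - y k) x‖ ≤ K :=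
        norm_fderiv_le_of_lipschitzOn ℝ hball (hlipk k)
      calc |fderiv ℝ (fun y => Zf A y k - y k) x (EuclideanSpace.single i 1)|
          = ‖fderiv ℝ (fun y => Zf A y k - y k) x (EuclideanSpace.single i 1)‖ :=
            (Real.norm_eq_abs _).symm
        _ ≤ ‖fderiv ℝ (fun y => Zf A y k - y k) x‖ * ‖(EuclideanSpace.single i 1 :
              EuclideanSpace ℝ (Fin n))‖ := ContinuousLinearMap.le_opNorm _ _
        _ = ‖fderiv ℝ (fun y => Zf A y k - y k) x‖ := by
            rw [EuclideanSpace.norm_single, norm_one, mul_one]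
        _ ≤ (K : ℝ) := hnb
        _ = Cg n lam * η * r := hKcoe
    constructor
    · intro i k
      calc |(if i = k then (1 : ℝ) else 0)
            - fderiv ℝ (fun y => Zf A y k) x (EuclideanSpace.single i 1)|
          ≤ Cg n lam * η * r := core i k
        _ ≤ (Cg n lam + 1) * η * r := by nlinarith [mul_pos hη hr]
    · have hdecomp : divg (Zf A) x - (n:ℝ)
          = ∑ i : Fin n, (fderiv ℝ (fun y => Zf A y i) x (EuclideanSpace.single i 1) - 1) := by
        rw [divg, Finset.sum_sub_distrib]
        simp [Finset.sum_const]
      rw [hdecomp]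
      calc |∑ i : Fin n, (fderiv ℝ (fun y => Zf A y i) x (EuclideanSpace.single i 1) - 1)|
          ≤ ∑ i : Fin n, |fderiv ℝ (fun y => Zf A y i) x (EuclideanSpace.single i 1) - 1| :=
            Finset.abs_sum_le_sum_abs _ _
        _ ≤ ∑ _i : Fin n, Cg n lam * η * r := by
            refine Finset.sum_le_sum fun i _ => ?_
            have := core i i
            rw [if_pos rfl] at this
            rwa [abs_sub_comm] at this
        _ = (n:ℝ) * (Cg n lam * η * r) := by simp [Finset.sum_const, mul_comm]
        _ ≤ ((n:ℝ) + 1) * (Cg n lam + 1) * η * r := by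
            have h1 : (0:ℝ) ≤ (n:ℝ) := Nat.cast_nonneg n
            nlinarith [mul_pos hη hr, mul_nonneg h1 (mul_pos hη hr).le, hCg.le,
              mul_nonneg (mul_nonneg h1 hCg.le) (mul_pos hη hr).le]
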